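/- arXiv:math/0503497 — 2 statements merged into one kernel-verified Lean document; each statement's English description precedes it below -/
import Mathlib

section
/- For every γ₀ > 0 there exists a constant c₀ > 1 such that for every complex number ζ = γ + iδ with γ = Re ζ ≥ γ₀ and all complex numbers C₊, C₋, the function v = C₊ φ_ζ^+ + C₋ φ_ζ^− satisfies the two-sided estimate c₀^{−1} γ ‖v‖² ≤ |C₊|² + |C₋|² ≤ c₀ γ ‖v‖². -/
open Set Filter

/-- The function `φ_ζ^+`. -/
noncomputable def phiP (ζ : ℂ) (x : ℝ) : ℂ :=
  if x < -1 then 0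
  else if x ≤ 1 then Complex.sinh (ζ * (x + 1)) / Complex.sinh (2 * ζ)
  else Complex.exp (-ζ * (x - 1))

/-- The function `φ_ζ^−(x) = φ_ζ^+(−x)`. -/
noncomputable def phiM (ζ : ℂ) (x : ℝ) : ℂ := phiP ζ (-x)

open MeasureTheory Real

lemma phiP_of_gt (ζ : ℂ) {x : ℝ} (hx : 1 < x) : phiP ζ x = Complex.exp (-ζ * (x - 1)) := by
  simp [phiP, not_lt.2 (by linarith : (-1:ℝ) ≤ x), not_le.2 hx]

lemma phiP_of_lt (ζ : ℂ) {x : ℝ} (hx : x < -1) : phiP ζ x = 0 := by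
  simp [phiP, hx]

lemma phiP_of_mem (ζ : ℂ) {x : ℝ} (hx : x ∈ Icc (-1:ℝ) 1) :
    phiP ζ x = Complex.sinh (ζ * (x + 1)) / Complex.sinh (2 * ζ) := by
  simp [phiP, not_lt.2 hx.1, hx.2]

lemma norm_exp_eq (ζ : ℂ) (x : ℝ) :
    ‖Complex.exp (-ζ * (↑x - 1))‖ = Real.exp (-(ζ.re * (x - 1))) := by
  rw [Complex.norm_exp]
  congr 1
  simp [Complex.mul_re]

lemma measurable_phiP (ζ : ℂ) : Measurable (phiP ζ) := by
  unfold phiP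
  refine Measurable.ite (measurableSet_lt measurable_id measurable_const) measurable_const ?_
  refine Measurable.ite (measurableSet_le measurable_id measurable_const) ?_ ?_
  · exact ((Complex.continuous_sinh.comp (by continuity)).div_const _).measurable
  · exact (Complex.continuous_exp.comp (by continuity)).measurable

lemma intExp {c : ℝ} (hc : 0 < c) (a : ℝ) :
    ∫ x in Ioi a, Real.exp (-(c * (x - a))) = c⁻¹ := by
  have h1 : ∀ x : ℝ, Real.exp (-(c * (x - a))) = Real.exp (c * a) * Real.exp (-(c * x)) := by
    intro x; rw [← Real.exp_add]; ring_nf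
  simp_rw [h1]
  rw [MeasureTheory.integral_const_mul]
  have h2 := MeasureTheory.integral_comp_mul_left_Ioi (fun y => Real.exp (-y)) a hc
  simp only [smul_eq_mul] at h2
  rw [h2, integral_exp_neg_Ioi]
  rw [mul_comm (c⁻¹) _, ← mul_assoc, ← Real.exp_add]
  simp [hc.ne']

lemma normsq_exp (ζ : ℂ) (x : ℝ) :
    ‖Complex.exp (-ζ * (↑x - 1))‖ ^ 2 = Real.exp (-(2 * ζ.re * (x - 1))) := by
  rw [norm_exp_eq, ← Real.exp_nat_mul]
  ring_nf

lemma integrable_sqP (ζ : ℂ) (hγ : 0 < ζ.re) :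
    Integrable (fun x => ‖phiP ζ x‖ ^ 2) := by
  rw [← integrableOn_univ]
  have hsub : (univ : Set ℝ) ⊆ Iio (-1) ∪ (Icc (-1) 1 ∪ Ioi 1) := by
    intro x _
    rcases lt_trichotomy x (-1) with h | h | h
    · exact Or.inl h
    · exact Or.inr (Or.inl ⟨le_of_eq h.symm, by linarith⟩)
    · rcases le_or_gt x 1 with h2 | h2
      · exact Or.inr (Or.inl ⟨h.le, h2⟩)
      · exact Or.inr (Or.inr h2)
  refine IntegrableOn.mono_set ?_ hsub
  refine IntegrableOn.union ?_ (IntegrableOn.union ?_ ?_)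
  · refine (integrableOn_congr_fun (fun x hx => ?_) measurableSet_Iio).2 (integrableOn_zero)
    rw [phiP_of_lt ζ hx]; simp
  · refine (integrableOn_congr_fun
        (g := fun x : ℝ => ‖Complex.sinh (ζ * (x + 1)) / Complex.sinh (2 * ζ)‖ ^ 2)
        (fun x hx => ?_) measurableSet_Icc).2 ?_
    · rw [phiP_of_mem ζ hx]
    · exact (((Complex.continuous_sinh.comp (by continuity)).div_const
        _).norm.pow 2).integrableOn_Icc
  · refine (integrableOn_congr_fun
        (g := fun x : ℝ => Real.exp (-(2 * ζ.re * (x - 1))))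
        (fun x hx => ?_) measurableSet_Ioi).2 ?_
    · rw [phiP_of_gt ζ hx, normsq_exp]
    · have : ∀ x : ℝ, Real.exp (-(2 * ζ.re * (x - 1)))
          = Real.exp (2 * ζ.re) * Real.exp (-(2 * ζ.re) * x) := by
        intro x; rw [← Real.exp_add]; ring_nf
      simp_rw [this]
      exact (exp_neg_integrableOn_Ioi 1 (by linarith)).const_mul _

lemma norm_sinh_le {z : ℂ} (hz : 0 ≤ z.re) : ‖Complex.sinh z‖ ≤ Real.exp z.re := by
  rw [Complex.sinh]
  have h1 : ‖Complex.exp z - Complex.exp (-z)‖ ≤ Real.exp z.re + Real.exp (-z.re) := by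
    refine (norm_sub_le _ _).trans ?_
    rw [Complex.norm_exp, Complex.norm_exp]
    simp
  have h2 : Real.exp (-z.re) ≤ Real.exp z.re := Real.exp_le_exp.2 (by linarith)
  have h3 : ‖(2:ℂ)‖ = 2 := by norm_num
  rw [norm_div, h3]
  linarith

lemma norm_sinh_ge (z : ℂ) : Real.sinh z.re ≤ ‖Complex.sinh z‖ := by
  rw [Complex.sinh, Real.sinh_eq]
  have h1 : ‖Complex.exp z‖ - ‖Complex.exp (-z)‖ ≤ ‖Complex.exp z - Complex.exp (-z)‖ :=
    norm_sub_norm_le _ _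
  rw [Complex.norm_exp, Complex.norm_exp] at h1
  have h3 : ‖(2:ℂ)‖ = 2 := by norm_num
  rw [norm_div, h3]
  simp only [Complex.neg_re] at h1
  linarith

lemma intIcc {c : ℝ} (hc : 0 < c) :
    ∫ x in Icc (-1:ℝ) 1, Real.exp (c * (x + 1)) = (Real.exp (2 * c) - 1) / c := by
  rw [integral_Icc_eq_integral_Ioc,
    ← intervalIntegral.integral_of_le (by norm_num : (-1:ℝ) ≤ 1)]
  have h1 : ∀ x : ℝ, Real.exp (c * (x + 1)) = Real.exp (c * x + c) := by
    intro x; ring_nf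
  simp_rw [h1]
  rw [intervalIntegral.integral_comp_mul_add Real.exp hc.ne' c]
  rw [integral_exp]
  rw [smul_eq_mul]
  rw [show c * 1 + c = 2 * c by ring, show c * (-1) + c = 0 by ring]
  rw [Real.exp_zero]
  ring

lemma cover : Iio (-1:ℝ) ∪ (Icc (-1) 1 ∪ Ioi 1) = univ := by
  ext x
  simp only [mem_union, mem_Iio, mem_Icc, mem_Ioi, mem_univ, iff_true]
  rcases lt_trichotomy x (-1) with h | h | h
  · exact Or.inl h
  · exact Or.inr (Or.inl ⟨le_of_eq h.symm, by linarith⟩)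
  · rcases le_or_gt x 1 with h2 | h2
    · exact Or.inr (Or.inl ⟨h.le, h2⟩)
    · exact Or.inr (Or.inr h2)

lemma split_integral {f : ℝ → ℝ} (hf : Integrable f) :
    ∫ x, f x = (∫ x in Iio (-1:ℝ), f x) + ((∫ x in Icc (-1:ℝ) 1, f x) +
      ∫ x in Ioi (1:ℝ), f x) := by
  have d1 : Disjoint (Icc (-1:ℝ) 1) (Ioi 1) := by
    rw [Set.disjoint_left]; intro x hx hx'; exact absurd hx.2 (not_le.2 hx')
  have d2 : Disjoint (Iio (-1:ℝ)) (Icc (-1) 1 ∪ Ioi 1) := by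
    rw [Set.disjoint_left]; intro x hx hx'
    rcases hx' with h | h
    · exact absurd h.1 (not_le.2 hx)
    · exact absurd (lt_trans hx (by norm_num)) (not_lt.2 (le_of_lt (show (1:ℝ) < x from h)))
  rw [← setIntegral_univ (f := f), ← cover,
    setIntegral_union d2 ((measurableSet_Icc).union measurableSet_Ioi)
      hf.integrableOn (hf.integrableOn),
    setIntegral_union d1 measurableSet_Ioi hf.integrableOn hf.integrableOn]

lemma keyP (γ₀ : ℝ) (hγ₀ : 0 < γ₀) (ζ : ℂ) (hγ : γ₀ ≤ ζ.re) :
    ζ.re * ∫ x : ℝ, ‖phiP ζ x‖ ^ 2 ≤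
      2 * Real.exp (4 * γ₀) / (Real.exp (4 * γ₀) - 1) + 1/2 := by
  have hγp : 0 < ζ.re := lt_of_lt_of_le hγ₀ hγ
  set γ := ζ.re with hγdef
  have h2γ : 0 < 2 * γ := by linarith
  have hint := integrable_sqP ζ hγp
  have E1 : (∫ x in Iio (-1:ℝ), ‖phiP ζ x‖ ^ 2) = 0 := by
    rw [show (0:ℝ) = ∫ x in Iio (-1:ℝ), (0:ℝ) by simp]
    refine setIntegral_congr_fun measurableSet_Iio (fun x hx => ?_)
    rw [phiP_of_lt ζ hx]; simp
  have E2 : (∫ x in Ioi (1:ℝ), ‖phiP ζ x‖ ^ 2) = (2 * γ)⁻¹ := by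
    rw [← intExp h2γ 1]
    refine setIntegral_congr_fun measurableSet_Ioi (fun x hx => ?_)
    rw [phiP_of_gt ζ hx, normsq_exp]
  have hspos : 0 < Real.sinh (2 * γ) := Real.sinh_pos_iff.2 h2γ
  have E3 : (∫ x in Icc (-1:ℝ) 1, ‖phiP ζ x‖ ^ 2) ≤
      ((Real.exp (2 * (2 * γ)) - 1) / (2 * γ)) / Real.sinh (2 * γ) ^ 2 := by
    have hgint : IntegrableOn
        (fun x : ℝ => Real.exp (2 * γ * (x + 1)) / Real.sinh (2 * γ) ^ 2)
        (Icc (-1) 1) := by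
      exact ((Real.continuous_exp.comp (by continuity)).div_const _).integrableOn_Icc
    have hb : ∀ x ∈ Icc (-1:ℝ) 1,
        ‖phiP ζ x‖ ^ 2 ≤ Real.exp (2 * γ * (x + 1)) / Real.sinh (2 * γ) ^ 2 := by
      intro x hx
      rw [phiP_of_mem ζ hx, norm_div, div_pow]
      have hre1 : (ζ * ((x:ℂ) + 1)).re = γ * (x + 1) := by
        simp [Complex.mul_re, Complex.add_re, Complex.add_im, hγdef]
      have hre2 : ((2:ℂ) * ζ).re = 2 * γ := by
        simp [Complex.mul_re, hγdef]
      have hnum : ‖Complex.sinh (ζ * ((x:ℂ) + 1))‖ ^ 2 ≤ Real.exp (2 * γ * (x + 1)) := by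
        have h := norm_sinh_le (z := ζ * ((x:ℂ) + 1))
          (by rw [hre1]; have h1 := hx.1; nlinarith)
        rw [hre1] at h
        have : Real.exp (γ * (x+1)) ^ 2 = Real.exp (2 * γ * (x+1)) := by
          rw [sq, ← Real.exp_add]; ring_nf
        nlinarith [norm_nonneg (Complex.sinh (ζ * ((x:ℂ) + 1)))]
      have hden : Real.sinh (2 * γ) ^ 2 ≤ ‖Complex.sinh ((2:ℂ) * ζ)‖ ^ 2 := by
        have h := norm_sinh_ge ((2:ℂ) * ζ)
        rw [hre2] at h
        nlinarith
      exact div_le_div₀ (Real.exp_nonneg _) hnum (by positivity) hden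
    calc (∫ x in Icc (-1:ℝ) 1, ‖phiP ζ x‖ ^ 2)
        ≤ ∫ x in Icc (-1:ℝ) 1, Real.exp (2 * γ * (x + 1)) / Real.sinh (2 * γ) ^ 2 :=
          setIntegral_mono_on (hint.integrableOn) hgint measurableSet_Icc hb
      _ = ((Real.exp (2 * (2 * γ)) - 1) / (2 * γ)) / Real.sinh (2 * γ) ^ 2 := by
          rw [integral_div, intIcc h2γ]
  have hsplit := split_integral hint
  set E := Real.exp (2 * γ) with hE
  have hE1 : 1 < E := Real.one_lt_exp_iff.2 h2γ
  have hsinh : Real.sinh (2 * γ) = (E - E⁻¹) / 2 := by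
    rw [Real.sinh_eq, hE, Real.exp_neg]
  have hexp4 : Real.exp (2 * (2 * γ)) = E ^ 2 := by
    rw [hE, ← Real.exp_nat_mul]; ring_nf
  set u₀ := Real.exp (4 * γ₀) with hu₀
  have hu₀1 : 1 < u₀ := Real.one_lt_exp_iff.2 (by linarith)
  have huE : u₀ ≤ E ^ 2 := by
    rw [hu₀, hE, ← Real.exp_nat_mul]
    exact Real.exp_le_exp.2 (by push_cast; linarith)
  have hEpos : (0:ℝ) < E := lt_trans one_pos hE1
  have key : γ * (((Real.exp (2 * (2 * γ)) - 1) / (2 * γ)) / Real.sinh (2 * γ) ^ 2)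
      ≤ 2 * u₀ / (u₀ - 1) := by
    rw [hexp4, hsinh]
    have h1 : γ * ((E ^ 2 - 1) / (2 * γ) / ((E - E⁻¹) / 2) ^ 2)
        = 2 * E ^ 2 / (E ^ 2 - 1) := by
      have hne : E ≠ 0 := ne_of_gt hEpos
      have hne2 : E ^ 2 - 1 ≠ 0 := by nlinarith
      have hq : ((E - E⁻¹) / 2) ^ 2 = (E ^ 2 - 1) ^ 2 / (4 * E ^ 2) := by
        field_simp; ring
      rw [hq]
      field_simp
      ring
    rw [h1, div_le_div_iff₀ (by nlinarith) (by linarith)]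
    nlinarith
  rw [hsplit, E1, E2]
  have step : γ * ((0:ℝ) + ((∫ x in Icc (-1:ℝ) 1, ‖phiP ζ x‖ ^ 2) + (2 * γ)⁻¹))
      ≤ 2 * u₀ / (u₀ - 1) + 1/2 := by
    have := mul_le_mul_of_nonneg_left E3 (le_of_lt hγp)
    have hinv : γ * (2 * γ)⁻¹ = 1/2 := by field_simp
    calc γ * ((0:ℝ) + ((∫ x in Icc (-1:ℝ) 1, ‖phiP ζ x‖ ^ 2) + (2 * γ)⁻¹))
        = γ * (∫ x in Icc (-1:ℝ) 1, ‖phiP ζ x‖ ^ 2) + γ * (2 * γ)⁻¹ := by ring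
      _ ≤ γ * (((Real.exp (2 * (2 * γ)) - 1) / (2 * γ)) / Real.sinh (2 * γ) ^ 2)
            + 1/2 := by rw [hinv]; linarith
      _ ≤ 2 * u₀ / (u₀ - 1) + 1/2 := by linarith
  exact step

lemma neg_emb : MeasurableEmbedding (fun x : ℝ => -x) :=
  (Homeomorph.neg ℝ).measurableEmbedding

lemma integrable_sqM (ζ : ℂ) (hγ : 0 < ζ.re) :
    Integrable (fun x => ‖phiM ζ x‖ ^ 2) := by
  unfold phiM
  exact ((Measure.measurePreserving_neg volume).integrable_comp_emb neg_emb).2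
    (integrable_sqP ζ hγ)

lemma integral_sqM (ζ : ℂ) : ∫ x, ‖phiM ζ x‖ ^ 2 = ∫ x, ‖phiP ζ x‖ ^ 2 := by
  unfold phiM
  exact integral_neg_eq_self (fun x => ‖phiP ζ x‖ ^ 2) (volume : Measure ℝ)

lemma measurable_v (ζ : ℂ) (Cp Cm : ℂ) :
    Measurable (fun x => ‖Cp * phiP ζ x + Cm * phiM ζ x‖ ^ 2) := by
  have h1 : Measurable (phiM ζ) := (measurable_phiP ζ).comp measurable_neg
  exact (((measurable_phiP ζ).const_mul Cp).add (h1.const_mul Cm)).norm.pow measurable_const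

lemma vsq_le (ζ : ℂ) (Cp Cm : ℂ) (x : ℝ) :
    ‖Cp * phiP ζ x + Cm * phiM ζ x‖ ^ 2 ≤
      2 * ‖Cp‖ ^ 2 * ‖phiP ζ x‖ ^ 2 + 2 * ‖Cm‖ ^ 2 * ‖phiM ζ x‖ ^ 2 := by
  have h1 : ‖Cp * phiP ζ x + Cm * phiM ζ x‖ ≤ ‖Cp‖ * ‖phiP ζ x‖ + ‖Cm‖ * ‖phiM ζ x‖ := by
    refine (norm_add_le _ _).trans ?_
    rw [norm_mul, norm_mul]
  nlinarith [norm_nonneg (Cp * phiP ζ x + Cm * phiM ζ x), norm_nonneg (Cp * phiP ζ x),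
    norm_nonneg (Cm * phiM ζ x), norm_nonneg Cp, norm_nonneg Cm,
    norm_nonneg (phiP ζ x), norm_nonneg (phiM ζ x),
    sq_nonneg (‖Cp‖ * ‖phiP ζ x‖ - ‖Cm‖ * ‖phiM ζ x‖)]

lemma integrable_vsq (ζ : ℂ) (hγ : 0 < ζ.re) (Cp Cm : ℂ) :
    Integrable (fun x => ‖Cp * phiP ζ x + Cm * phiM ζ x‖ ^ 2) := by
  refine Integrable.mono' (((integrable_sqP ζ hγ).const_mul (2 * ‖Cp‖ ^ 2)).add
    ((integrable_sqM ζ hγ).const_mul (2 * ‖Cm‖ ^ 2)))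
    (measurable_v ζ Cp Cm).aestronglyMeasurable
    (Filter.Eventually.of_forall fun x => ?_)
  rw [Real.norm_eq_abs, abs_of_nonneg (by positivity)]
  exact vsq_le ζ Cp Cm x

lemma vsq_Ioi (ζ : ℂ) (hγ : 0 < ζ.re) (Cp Cm : ℂ) :
    ∫ x in Ioi (1:ℝ), ‖Cp * phiP ζ x + Cm * phiM ζ x‖ ^ 2 = ‖Cp‖ ^ 2 * (2 * ζ.re)⁻¹ := by
  have hcongr : ∀ x ∈ Ioi (1:ℝ), ‖Cp * phiP ζ x + Cm * phiM ζ x‖ ^ 2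
      = ‖Cp‖ ^ 2 * Real.exp (-(2 * ζ.re * (x - 1))) := by
    intro x hx
    have hx1 : (1:ℝ) < x := hx
    have hM : phiM ζ x = 0 := phiP_of_lt ζ (by simp only [neg_lt_neg_iff]; exact hx1)
    rw [hM, mul_zero, add_zero, phiP_of_gt ζ hx1, norm_mul, mul_pow, normsq_exp]
  rw [setIntegral_congr_fun measurableSet_Ioi hcongr, MeasureTheory.integral_const_mul,
    intExp (by linarith) 1]

lemma vsq_Iio (ζ : ℂ) (hγ : 0 < ζ.re) (Cp Cm : ℂ) :
    ∫ x in Iio (-1:ℝ), ‖Cp * phiP ζ x + Cm * phiM ζ x‖ ^ 2 = ‖Cm‖ ^ 2 * (2 * ζ.re)⁻¹ := by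
  have hcongr : ∀ x ∈ Iio (-1:ℝ), ‖Cp * phiP ζ x + Cm * phiM ζ x‖ ^ 2
      = (fun y : ℝ => ‖Cm‖ ^ 2 * Real.exp (-(2 * ζ.re * (y - 1)))) (-x) := by
    intro x hx
    have hx1 : x < -1 := hx
    have hP : phiP ζ x = 0 := phiP_of_lt ζ hx1
    have hM : phiM ζ x = Complex.exp (-ζ * ((-x:ℝ) - 1)) := by
      unfold phiM
      exact phiP_of_gt ζ (by linarith)
    rw [hP, mul_zero, zero_add, hM, norm_mul, mul_pow, normsq_exp]
  rw [setIntegral_congr_fun measurableSet_Iio hcongr, ← integral_Iic_eq_integral_Iio]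
  have h2 := integral_comp_neg_Iic (-1:ℝ)
    (fun y : ℝ => ‖Cm‖ ^ 2 * Real.exp (-(2 * ζ.re * (y - 1))))
  norm_num at h2 ⊢
  rw [h2, MeasureTheory.integral_const_mul, intExp (by linarith) 1]
  ring

theorem stmt5 (γ₀ : ℝ) (hγ₀ : 0 < γ₀) :
    ∃ c₀ : ℝ, 1 < c₀ ∧ ∀ ζ : ℂ, γ₀ ≤ ζ.re → ∀ Cp Cm : ℂ,
      c₀⁻¹ * ζ.re * (∫ x : ℝ, ‖Cp * phiP ζ x + Cm * phiM ζ x‖ ^ 2) ≤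
          ‖Cp‖ ^ 2 + ‖Cm‖ ^ 2 ∧
      ‖Cp‖ ^ 2 + ‖Cm‖ ^ 2 ≤
          c₀ * ζ.re * (∫ x : ℝ, ‖Cp * phiP ζ x + Cm * phiM ζ x‖ ^ 2) := by
  set K : ℝ := 2 * Real.exp (4 * γ₀) / (Real.exp (4 * γ₀) - 1) + 1/2 with hK
  have hu₀1 : 1 < Real.exp (4 * γ₀) := Real.one_lt_exp_iff.2 (by linarith)
  have hKpos : 0 < K := by
    have : 0 < 2 * Real.exp (4 * γ₀) / (Real.exp (4 * γ₀) - 1) := by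
      apply div_pos <;> nlinarith
    rw [hK]; linarith
  refine ⟨2 * K + 2, by linarith, fun ζ hγ Cp Cm => ?_⟩
  have hγp : 0 < ζ.re := lt_of_lt_of_le hγ₀ hγ
  set γ := ζ.re with hγdef
  set I : ℝ := ∫ x : ℝ, ‖Cp * phiP ζ x + Cm * phiM ζ x‖ ^ 2 with hI
  have hIv := integrable_vsq ζ hγp Cp Cm
  have hInn : 0 ≤ I := integral_nonneg fun x => by positivity
  have hsum : (0:ℝ) ≤ ‖Cp‖ ^ 2 + ‖Cm‖ ^ 2 := by positivity
  -- upper bound: γ * I ≤ 2 * K * (‖Cp‖^2 + ‖Cm‖^2)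
  have hup : γ * I ≤ 2 * K * (‖Cp‖ ^ 2 + ‖Cm‖ ^ 2) := by
    have h1 : I ≤ ∫ x : ℝ, (2 * ‖Cp‖ ^ 2 * ‖phiP ζ x‖ ^ 2 +
        2 * ‖Cm‖ ^ 2 * ‖phiM ζ x‖ ^ 2) := by
      refine integral_mono hIv (((integrable_sqP ζ hγp).const_mul _).add
        ((integrable_sqM ζ hγp).const_mul _)) (fun x => vsq_le ζ Cp Cm x)
    rw [integral_add ((integrable_sqP ζ hγp).const_mul _)
        ((integrable_sqM ζ hγp).const_mul _),
      MeasureTheory.integral_const_mul, MeasureTheory.integral_const_mul,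
      integral_sqM ζ] at h1
    have hKγ := keyP γ₀ hγ₀ ζ hγ
    have hPnn : 0 ≤ ∫ x : ℝ, ‖phiP ζ x‖ ^ 2 := integral_nonneg fun x => by positivity
    have h2 : γ * I ≤ γ * (2 * ‖Cp‖ ^ 2 * ∫ x : ℝ, ‖phiP ζ x‖ ^ 2)
        + γ * (2 * ‖Cm‖ ^ 2 * ∫ x : ℝ, ‖phiP ζ x‖ ^ 2) := by nlinarith
    have h3 : γ * (2 * ‖Cp‖ ^ 2 * ∫ x : ℝ, ‖phiP ζ x‖ ^ 2)
        = 2 * ‖Cp‖ ^ 2 * (γ * ∫ x : ℝ, ‖phiP ζ x‖ ^ 2) := by ring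
    have h4 : γ * (2 * ‖Cm‖ ^ 2 * ∫ x : ℝ, ‖phiP ζ x‖ ^ 2)
        = 2 * ‖Cm‖ ^ 2 * (γ * ∫ x : ℝ, ‖phiP ζ x‖ ^ 2) := by ring
    rw [h3, h4] at h2
    have h5 : 2 * ‖Cp‖ ^ 2 * (γ * ∫ x : ℝ, ‖phiP ζ x‖ ^ 2) ≤ 2 * ‖Cp‖ ^ 2 * K := by
      have : (0:ℝ) ≤ 2 * ‖Cp‖ ^ 2 := by positivity
      exact mul_le_mul_of_nonneg_left hKγ this
    have h6 : 2 * ‖Cm‖ ^ 2 * (γ * ∫ x : ℝ, ‖phiP ζ x‖ ^ 2) ≤ 2 * ‖Cm‖ ^ 2 * K := by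
      have : (0:ℝ) ≤ 2 * ‖Cm‖ ^ 2 := by positivity
      exact mul_le_mul_of_nonneg_left hKγ this
    nlinarith
  -- lower bound: ‖Cp‖^2 + ‖Cm‖^2 ≤ 2 * γ * I
  have hlow : ‖Cp‖ ^ 2 + ‖Cm‖ ^ 2 ≤ 2 * γ * I := by
    have hd : Disjoint (Iio (-1:ℝ)) (Ioi 1) := by
      rw [Set.disjoint_left]; intro x hx hx'
      exact absurd (lt_trans hx (by norm_num)) (not_lt.2 (le_of_lt (show (1:ℝ) < x from hx')))
    have hsplit : (∫ x in Iio (-1:ℝ) ∪ Ioi 1, ‖Cp * phiP ζ x + Cm * phiM ζ x‖ ^ 2)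
        = ‖Cm‖ ^ 2 * (2 * γ)⁻¹ + ‖Cp‖ ^ 2 * (2 * γ)⁻¹ := by
      rw [setIntegral_union hd measurableSet_Ioi hIv.integrableOn hIv.integrableOn,
        vsq_Iio ζ hγp Cp Cm, vsq_Ioi ζ hγp Cp Cm]
    have hle : (∫ x in Iio (-1:ℝ) ∪ Ioi 1, ‖Cp * phiP ζ x + Cm * phiM ζ x‖ ^ 2) ≤ I :=
      setIntegral_le_integral hIv (Filter.Eventually.of_forall fun x => by positivity)
    rw [hsplit] at hle
    have h2γ : (0:ℝ) < 2 * γ := by linarith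
    have := mul_le_mul_of_nonneg_left hle (le_of_lt h2γ)
    calc ‖Cp‖ ^ 2 + ‖Cm‖ ^ 2
        = 2 * γ * (‖Cm‖ ^ 2 * (2 * γ)⁻¹ + ‖Cp‖ ^ 2 * (2 * γ)⁻¹) := by
          field_simp; ring
      _ ≤ 2 * γ * I := this
  constructor
  · rw [mul_assoc, inv_mul_le_iff₀ (by linarith : (0:ℝ) < 2 * K + 2)]
    calc γ * I ≤ 2 * K * (‖Cp‖ ^ 2 + ‖Cm‖ ^ 2) := hup
      _ ≤ (2 * K + 2) * (‖Cp‖ ^ 2 + ‖Cm‖ ^ 2) := by nlinarith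
  · calc ‖Cp‖ ^ 2 + ‖Cm‖ ^ 2 ≤ 2 * γ * I := hlow
      _ ≤ (2 * K + 2) * γ * I := by nlinarith
end

section
/- Let ζ = γ + iδ be a complex number with γ = Re ζ > 0. Then φ_ζ^{∘,+} is continuous on ℝ with φ_ζ^{∘,+}(0) = 0, φ_ζ^{∘,+}(1) = 1, φ_ζ^{∘,+}(−1) = 0, it satisfies v'' = ζ² v on each of the intervals (0,1) and (1,∞), and for every function v = C₊ φ_ζ^{∘,+} + C₋ φ_ζ^{∘,−} (C₊, C₋ ∈ ℂ) the jumps of the derivative at ±1 satisfy [v'](1) = −(2ζ/(1 − e^{−2ζ})) v(1) and [v'](−1) = −(2ζ/(1 − e^{−2ζ})) v(−1). -/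
open Set Filter

/-- The function `φ_ζ^{∘,+}`: zero for `x < 0`, `sinh(ζx)/sinh(ζ)` for `0 ≤ x ≤ 1`,
and `e^{−ζ(x−1)}` for `x > 1`. -/
noncomputable def phiCP (ζ : ℂ) (x : ℝ) : ℂ :=
  if x < 0 then 0
  else if x ≤ 1 then Complex.sinh (ζ * x) / Complex.sinh ζ
  else Complex.exp (-ζ * (x - 1))

/-- The function `φ_ζ^{∘,−}(x) = φ_ζ^{∘,+}(−x)`. -/
noncomputable def phiCM (ζ : ℂ) (x : ℝ) : ℂ := phiCP ζ (-x)

/-- `f` has one-sided derivatives at `a` and the jump `f'(a+) − f'(a−)` equals `j`. -/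
def DerivJump (f : ℝ → ℂ) (a : ℝ) (j : ℂ) : Prop :=
  ∃ dp dm : ℂ, HasDerivWithinAt f dp (Set.Ici a) a ∧
    HasDerivWithinAt f dm (Set.Iic a) a ∧ j = dp - dm

lemma sinh_ne (ζ : ℂ) (hγ : 0 < ζ.re) : Complex.sinh ζ ≠ 0 := by
  intro h
  have h2 : Complex.exp ζ = Complex.exp (-ζ) := by
    have := Complex.two_sinh ζ
    rw [h, mul_zero] at this
    linear_combination -this
  have h3 := congrArg norm h2
  rw [Complex.norm_exp, Complex.norm_exp] at h3
  have := Real.exp_injective h3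
  simp at this; linarith

lemma expm_ne (ζ : ℂ) (hγ : 0 < ζ.re) : 1 - Complex.exp (-(2*ζ)) ≠ 0 := by
  intro h
  have h2 : Complex.exp (-(2*ζ)) = 1 := by linear_combination -h
  have h3 := congrArg norm h2
  rw [Complex.norm_exp] at h3
  simp at h3
  linarith

lemma key (ζ : ℂ) (hγ : 0 < ζ.re) :
    -ζ - ζ * Complex.cosh ζ / Complex.sinh ζ = -(2 * ζ / (1 - Complex.exp (-(2 * ζ)))) := by
  have hs := sinh_ne ζ hγ
  have hd := expm_ne ζ hγ
  have hE : Complex.exp ζ ≠ 0 := Complex.exp_ne_zero ζ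
  have h1 : 2 * Complex.sinh ζ = Complex.exp ζ - Complex.exp (-ζ) := Complex.two_sinh ζ
  have h2 : 2 * Complex.cosh ζ = Complex.exp ζ + Complex.exp (-ζ) := Complex.two_cosh ζ
  have h3 : Complex.exp ζ * Complex.exp (-(2*ζ)) = Complex.exp (-ζ) := by
    rw [← Complex.exp_add]; ring_nf
  have hd' : 1 - Complex.exp (-(ζ*2)) ≠ 0 := by rwa [mul_comm]
  field_simp
  rw [mul_comm ζ 2]
  linear_combination (-ζ*(1-Complex.exp (-(2*ζ)))/2 + ζ)*h1 + (-ζ*(1-Complex.exp (-(2*ζ)))/2)*h2 + ζ*h3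

lemma hasDerivAt_sinh_mul (a : ℂ) (x : ℝ) :
    HasDerivAt (fun y : ℝ => Complex.sinh (a * y)) (a * Complex.cosh (a * x)) x := by
  have h1 : HasDerivAt (fun w : ℂ => Complex.sinh (a * w)) (a * Complex.cosh (a * x)) (x : ℂ) := by
    simpa [mul_comm, Function.comp_def] using (Complex.hasDerivAt_sinh (a * (x:ℂ))).comp (x:ℂ)
      ((hasDerivAt_id (x:ℂ)).const_mul a)
  exact h1.comp_ofReal

lemma hasDerivAt_cosh_mul (a : ℂ) (x : ℝ) :
    HasDerivAt (fun y : ℝ => Complex.cosh (a * y)) (a * Complex.sinh (a * x)) x := by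
  have h1 : HasDerivAt (fun w : ℂ => Complex.cosh (a * w)) (a * Complex.sinh (a * x)) (x : ℂ) := by
    simpa [mul_comm, Function.comp_def] using (Complex.hasDerivAt_cosh (a * (x:ℂ))).comp (x:ℂ)
      ((hasDerivAt_id (x:ℂ)).const_mul a)
  exact h1.comp_ofReal

lemma hasDerivAt_exp_aff (a b : ℂ) (x : ℝ) :
    HasDerivAt (fun y : ℝ => Complex.exp (a * (y - b))) (a * Complex.exp (a * (x - b))) x := by
  have h1 : HasDerivAt (fun w : ℂ => Complex.exp (a * (w - b)))
      (a * Complex.exp (a * ((x:ℂ) - b))) (x : ℂ) := by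
    simpa [mul_comm, Function.comp_def] using (Complex.hasDerivAt_exp (a * ((x:ℂ) - b))).comp (x:ℂ)
      (((hasDerivAt_id (x:ℂ)).sub_const b).const_mul a)
  exact h1.comp_ofReal

theorem stmt6 (ζ : ℂ) (hγ : 0 < ζ.re) :
    Continuous (phiCP ζ) ∧
    phiCP ζ 0 = 0 ∧ phiCP ζ 1 = 1 ∧ phiCP ζ (-1) = 0 ∧
    (∃ g : ℝ → ℂ,
      (∀ x ∈ Ioo (0 : ℝ) 1 ∪ Ioi (1 : ℝ), HasDerivAt (phiCP ζ) (g x) x) ∧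
      (∀ x ∈ Ioo (0 : ℝ) 1 ∪ Ioi (1 : ℝ), HasDerivAt g (ζ ^ 2 * phiCP ζ x) x)) ∧
    (∀ Cp Cm : ℂ,
      DerivJump (fun x => Cp * phiCP ζ x + Cm * phiCM ζ x) 1
        (-(2 * ζ / (1 - Complex.exp (-(2 * ζ)))) *
          (Cp * phiCP ζ 1 + Cm * phiCM ζ 1)) ∧
      DerivJump (fun x => Cp * phiCP ζ x + Cm * phiCM ζ x) (-1)
        (-(2 * ζ / (1 - Complex.exp (-(2 * ζ)))) *
          (Cp * phiCP ζ (-1) + Cm * phiCM ζ (-1)))) := by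
  have hs := sinh_ne ζ hγ
  have hk := key ζ hγ
  have hP0 : phiCP ζ 0 = 0 := by simp [phiCP]
  have hP1 : phiCP ζ 1 = 1 := by simp [phiCP, div_self hs]
  have hPm1 : phiCP ζ (-1) = 0 := by norm_num [phiCP]
  have hM1 : phiCM ζ 1 = 0 := by simpa [phiCM] using hPm1
  have hMm1 : phiCM ζ (-1) = 1 := by simpa [phiCM] using hP1
  -- continuity
  have hrep : phiCP ζ = fun x : ℝ => if x ≤ 1 then Complex.sinh (ζ * (max x 0)) / Complex.sinh ζ
      else Complex.exp (-ζ * (x - 1)) := by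
    funext x
    by_cases h0 : x < 0
    · have hx1 : x ≤ 1 := h0.le.trans zero_le_one
      simp [phiCP, h0, hx1, max_eq_right h0.le]
    · by_cases h1 : x ≤ 1
      · simp [phiCP, h0, h1, max_eq_left (not_lt.1 h0)]
      · simp [phiCP, h0, h1]
  have hcont : Continuous (phiCP ζ) := by
    rw [hrep]
    apply Continuous.if_le
    · exact (Complex.continuous_sinh.comp (continuous_const.mul
        (Complex.continuous_ofReal.comp (continuous_id.max continuous_const)))).div_const _
    · exact Complex.continuous_exp.comp (continuous_const.mul
        (Complex.continuous_ofReal.sub continuous_const))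
    · exact continuous_id
    · exact continuous_const
    · intro x hx
      rw [hx]
      norm_num [div_self hs]
  refine ⟨hcont, hP0, hP1, hPm1,
    ⟨fun x => if x ≤ 1 then ζ * Complex.cosh (ζ * x) / Complex.sinh ζ
      else -ζ * Complex.exp (-ζ * (x - 1)), ?_, ?_⟩, ?_⟩
  · rintro x (⟨hx0, hx1⟩ | hx)
    · have hev : phiCP ζ =ᶠ[nhds x] (fun y : ℝ => Complex.sinh (ζ * y) / Complex.sinh ζ) := by
        filter_upwards [isOpen_Ioo.mem_nhds (⟨hx0, hx1⟩ : x ∈ Ioo (0:ℝ) 1)] with y hy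
        simp [phiCP, not_lt.2 hy.1.le, hy.2.le]
      have hm := (hasDerivAt_sinh_mul ζ x).div_const (Complex.sinh ζ)
      simpa [hx1.le] using hm.congr_of_eventuallyEq hev
    · have hev : phiCP ζ =ᶠ[nhds x] (fun y : ℝ => Complex.exp (-ζ * ((y:ℂ) - 1))) := by
        filter_upwards [isOpen_Ioi.mem_nhds hx] with y hy
        simp [phiCP, not_lt.2 (zero_le_one.trans (mem_Ioi.1 hy).le), not_le.2 (mem_Ioi.1 hy)]
      have hm := hasDerivAt_exp_aff (-ζ) 1 x
      simpa [not_le.2 (mem_Ioi.1 hx)] using hm.congr_of_eventuallyEq hev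
  · rintro x (⟨hx0, hx1⟩ | hx)
    · have hφ : phiCP ζ x = Complex.sinh (ζ * x) / Complex.sinh ζ := by
        simp [phiCP, not_lt.2 hx0.le, hx1.le]
      have hev : (fun y : ℝ => if y ≤ 1 then ζ * Complex.cosh (ζ * y) / Complex.sinh ζ
          else -ζ * Complex.exp (-ζ * ((y:ℂ) - 1))) =ᶠ[nhds x]
          (fun y : ℝ => ζ * Complex.cosh (ζ * y) / Complex.sinh ζ) := by
        filter_upwards [isOpen_Iio.mem_nhds hx1] with y hy
        simp [le_of_lt (mem_Iio.1 hy)]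
      have hm := ((hasDerivAt_cosh_mul ζ x).const_mul ζ).div_const (Complex.sinh ζ)
      have := hm.congr_of_eventuallyEq hev
      convert this using 1
      · rfl
      rw [hφ]; ring
    · have hφ : phiCP ζ x = Complex.exp (-ζ * ((x:ℂ) - 1)) := by
        simp [phiCP, not_lt.2 (zero_le_one.trans (mem_Ioi.1 hx).le), not_le.2 (mem_Ioi.1 hx)]
      have hev : (fun y : ℝ => if y ≤ 1 then ζ * Complex.cosh (ζ * y) / Complex.sinh ζ
          else -ζ * Complex.exp (-ζ * ((y:ℂ) - 1))) =ᶠ[nhds x]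
          (fun y : ℝ => -ζ * Complex.exp (-ζ * ((y:ℂ) - 1))) := by
        filter_upwards [isOpen_Ioi.mem_nhds hx] with y hy
        simp [not_le.2 (mem_Ioi.1 hy)]
      have hm := (hasDerivAt_exp_aff (-ζ) 1 x).const_mul (-ζ)
      have := hm.congr_of_eventuallyEq hev
      convert this using 1
      · rfl
      rw [hφ]; ring
  · intro Cp Cm
    constructor
    · refine ⟨Cp * -ζ, Cp * (ζ * Complex.cosh ζ / Complex.sinh ζ), ?_, ?_, ?_⟩
      · have hmod : HasDerivAt (fun y : ℝ => Cp * Complex.exp (-ζ * ((y:ℂ) - 1)))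
            (Cp * -ζ) 1 := by
          have := (hasDerivAt_exp_aff (-ζ) 1 1).const_mul Cp
          simpa using this
        refine hmod.hasDerivWithinAt.congr_of_mem (fun y hy => ?_) Set.self_mem_Ici
        have hy' : (1:ℝ) ≤ y := hy
        have hM : phiCM ζ y = 0 := by
          simp [phiCM, phiCP, show -y < 0 by linarith]
        by_cases h1 : y ≤ 1
        · have hy1 : y = 1 := le_antisymm h1 hy'
          subst hy1
          norm_num [hP1, hM1]
        · simp [phiCP, show ¬ y < 0 by push_neg; linarith, h1, hM]
      · have hmod : HasDerivAt (fun y : ℝ => Cp * (Complex.sinh (ζ * y) / Complex.sinh ζ))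
            (Cp * (ζ * Complex.cosh ζ / Complex.sinh ζ)) 1 := by
          have := ((hasDerivAt_sinh_mul ζ 1).div_const (Complex.sinh ζ)).const_mul Cp
          simpa using this
        refine hmod.hasDerivWithinAt.congr_of_eventuallyEq ?_ ?_
        · have hmem : Ioi (0:ℝ) ∈ nhdsWithin (1:ℝ) (Iic 1) :=
            mem_nhdsWithin_of_mem_nhds (isOpen_Ioi.mem_nhds (Set.mem_Ioi.2 one_pos))
          filter_upwards [hmem, self_mem_nhdsWithin] with y hy0 hy1
          have hM : phiCM ζ y = 0 := by
            simp [phiCM, phiCP, show -y < 0 by simpa using hy0]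
          have hy1' : y ≤ 1 := hy1
          simp [phiCP, not_lt.2 (le_of_lt (mem_Ioi.1 hy0)), hy1', hM]
        · norm_num [hP1, hM1, div_self hs]
      · rw [hP1, hM1]
        linear_combination (-Cp) * hk
    · refine ⟨Cm * (-ζ * Complex.cosh ζ / Complex.sinh ζ), Cm * ζ, ?_, ?_, ?_⟩
      · have hmod : HasDerivAt (fun y : ℝ => Cm * (Complex.sinh (-ζ * y) / Complex.sinh ζ))
            (Cm * (-ζ * Complex.cosh ζ / Complex.sinh ζ)) (-1 : ℝ) := by
          have := ((hasDerivAt_sinh_mul (-ζ) (-1)).div_const (Complex.sinh ζ)).const_mul Cm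
          simpa using this
        refine hmod.hasDerivWithinAt.congr_of_eventuallyEq ?_ ?_
        · have hmem : Iio (0:ℝ) ∈ nhdsWithin (-1:ℝ) (Ici (-1)) :=
            mem_nhdsWithin_of_mem_nhds (isOpen_Iio.mem_nhds (by norm_num))
          filter_upwards [hmem, self_mem_nhdsWithin] with y hy0 hym
          have hy0' : y < 0 := hy0
          have hym' : (-1:ℝ) ≤ y := hym
          have hP : phiCP ζ y = 0 := by simp [phiCP, hy0']
          have hM : phiCM ζ y = Complex.sinh (-ζ * y) / Complex.sinh ζ := by
            simp [phiCM, phiCP, show ¬ -y < 0 by linarith, show -y ≤ 1 by linarith]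
          simp [hP, hM]
        · norm_num [hPm1, hMm1, div_self hs]
      · have hmod : HasDerivAt (fun y : ℝ => Cm * Complex.exp (ζ * ((y:ℂ) - (-1))))
            (Cm * ζ) (-1 : ℝ) := by
          have := (hasDerivAt_exp_aff ζ (-1) (-1)).const_mul Cm
          simpa using this
        refine hmod.hasDerivWithinAt.congr_of_mem (fun y hy => ?_) Set.self_mem_Ici
        have hy' : y ≤ -1 := hy
        have hP : phiCP ζ y = 0 := by simp [phiCP, show y < 0 by linarith]
        by_cases h1 : -y ≤ 1
        · have hy1 : y = -1 := by linarith
          subst hy1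
          norm_num [hPm1, hMm1]
        · have hM : phiCM ζ y = Complex.exp (ζ * ((y:ℂ) - (-1))) := by
            simp only [phiCM, phiCP, show ¬ -y < 0 by linarith, if_neg, h1, if_false]
            push_cast
            ring_nf
          simp [hP, hM]
      · rw [hPm1, hMm1]
        linear_combination (-Cm) * hk
end
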